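/- Let $(A_n)$ be a sequence of events. If $P(\limsup_n A_n) > 0$, then for every $m \geq 0$, either $P(A_n) \not\to 0$ or $\sum_{n=1}^\infty P(A_n \cap A_{n+1}^c \cap \cdots \cap A_{n+m}^c) = \infty$. -/

import Mathlib

/-!
Put `B n = A n ∩ A (n+1)ᶜ ∩ ⋯ ∩ A (n+m)ᶜ` and `C k = A k ∪ ⋯ ∪ A (k+m-1)`. A point lying in
infinitely many `A n` but in only finitely many `B n` returns to the `A n` within every `m` steps
from some time on, so it lies in `C k` for all large `k`. Hence
`limsup A ⊆ limsup B ∪ liminf C`. If `∑ μ (B n) < ∞`, the first set is null by Borel–Cantelli;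
if `μ (A n) → 0`, then `μ (C k) → 0` and the second set is null.
-/

open MeasureTheory Filter Set Topology

theorem Nat.exists_mem_Ico_of_forall_exists_add_mem_Icc {p : ℕ → Prop} {m n₀ : ℕ}
    (hstep : ∀ n ≥ n₀, p n → ∃ j ∈ Finset.Icc 1 m, p (n + j)) (h₀ : p n₀) {k : ℕ}
    (hk : n₀ ≤ k) : ∃ n ∈ Finset.Ico k (k + m), p n := by
  induction k, hk using Nat.le_induction with
  | base =>
    obtain ⟨j, hj, -⟩ := hstep n₀ le_rfl h₀
    simp only [Finset.mem_Icc] at hj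
    exact ⟨n₀, Finset.mem_Ico.2 ⟨le_rfl, by omega⟩, h₀⟩
  | succ k hk ih =>
    obtain ⟨n, hn, hpn⟩ := ih
    simp only [Finset.mem_Ico] at hn ⊢
    rcases hn.1.eq_or_lt with rfl | hlt
    · obtain ⟨j, hj, hpj⟩ := hstep k hk hpn
      simp only [Finset.mem_Icc] at hj
      exact ⟨k + j, ⟨by omega, by omega⟩, hpj⟩
    · exact ⟨n, ⟨hlt, by omega⟩, hpn⟩

theorem limsup_subset_limsup_inter_iInter_compl_union_liminf_iUnion {α : Type*}
    (A : ℕ → Set α) (m : ℕ) :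
    limsup A atTop ⊆ limsup (fun n => A n ∩ ⋂ j ∈ Finset.Icc 1 m, (A (n + j))ᶜ) atTop ∪
      liminf (fun k => ⋃ j ∈ Finset.range m, A (k + j)) atTop := by
  intro x hx
  rw [mem_union, or_iff_not_imp_left, mem_limsup_iff_frequently_mem, not_frequently]
  intro hB
  obtain ⟨N, hN⟩ := eventually_atTop.1 hB
  obtain ⟨n₀, hn₀, hx₀⟩ := frequently_atTop.1 (mem_limsup_iff_frequently_mem.1 hx) N
  have hstep : ∀ n ≥ n₀, x ∈ A n → ∃ j ∈ Finset.Icc 1 m, x ∈ A (n + j) := by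
    intro n hn hxn
    by_contra! hnot
    exact hN n (hn₀.trans hn) ⟨hxn, mem_iInter₂.2 hnot⟩
  rw [mem_liminf_iff_eventually_mem]
  filter_upwards [eventually_ge_atTop n₀] with k hk
  obtain ⟨n, hn, hxn⟩ := Nat.exists_mem_Ico_of_forall_exists_add_mem_Icc hstep hx₀ hk
  rw [Finset.mem_Ico] at hn
  refine mem_iUnion₂.2 ⟨n - k, Finset.mem_range.2 (by omega), ?_⟩
  rwa [Nat.add_sub_cancel' hn.1]

namespace MeasureTheory

variable {α : Type*} [MeasurableSpace α] {μ : Measure α}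

theorem measure_liminf_atTop_eq_zero_of_tendsto {s : ℕ → Set α}
    (hs : Tendsto (fun n => μ (s n)) atTop (𝓝 0)) : μ (liminf s atTop) = 0 := by
  rw [liminf_eq_iSup_iInf_of_nat, iSup_eq_iUnion]
  refine measure_iUnion_null fun n => le_antisymm (ge_of_tendsto hs ?_) zero_le
  filter_upwards [eventually_ge_atTop n] with k hk
  exact measure_mono (iInf₂_le k hk)

theorem tendsto_measure_iUnion_range_add {A : ℕ → Set α}
    (hA : Tendsto (fun n => μ (A n)) atTop (𝓝 0)) (m : ℕ) :
    Tendsto (fun k => μ (⋃ j ∈ Finset.range m, A (k + j))) atTop (𝓝 0) := by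
  have hsum : Tendsto (fun k => ∑ j ∈ Finset.range m, μ (A (k + j))) atTop (𝓝 0) := by
    simpa using tendsto_finsetSum (Finset.range m) fun j _ => hA.comp (tendsto_add_atTop_nat j)
  exact tendsto_of_tendsto_of_tendsto_of_le_of_le tendsto_const_nhds hsum (fun _ => zero_le)
    fun _ => measure_biUnion_finset_le _ _

end MeasureTheory

theorem contrapositive_main_general {Ω : Type*} [MeasurableSpace Ω] (μ : Measure Ω)
    (A : ℕ → Set Ω) (h : 0 < μ (limsup A atTop)) (m : ℕ) :
    ¬ Tendsto (fun n => μ (A n)) atTop (nhds 0) ∨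
      ∑' n, μ (A n ∩ ⋂ j ∈ Finset.Icc 1 m, (A (n + j))ᶜ) = ⊤ := by
  rw [or_iff_not_imp_left, not_not]
  intro hA
  by_contra hB
  have hnull : μ (limsup A atTop) = 0 :=
    measure_mono_null (limsup_subset_limsup_inter_iInter_compl_union_liminf_iUnion A m) <|
      measure_union_null (measure_limsup_atTop_eq_zero hB)
        (measure_liminf_atTop_eq_zero_of_tendsto (tendsto_measure_iUnion_range_add hA m))
  exact h.ne' hnull

theorem contrapositive_main {Ω : Type*} [MeasurableSpace Ω] (μ : Measure Ω)
    [IsProbabilityMeasure μ] (A : ℕ → Set Ω) (hA : ∀ n, MeasurableSet (A n))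
    (h : 0 < μ (limsup A atTop)) (m : ℕ) :
    ¬ Tendsto (fun n => μ (A n)) atTop (nhds 0) ∨
      ∑' n, μ (A n ∩ ⋂ j ∈ Finset.Icc 1 m, (A (n + j))ᶜ) = ⊤ :=
  contrapositive_main_general μ A h m
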